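/- arXiv:2210.08110 — 3 statements merged into one kernel-verified Lean document; each statement's English description precedes it below -/
import Mathlib

section
/- Let h : ℕ → ℝ be nonnegative, c > 1, D₄ ≥ 0, and suppose for all k ≥ 0: h(k+1) ≤ h(k) - (c/(c+k+1))·h(k) + D₄·(c/(c+k+1))². If h₀ = max{h(0), D₄·c²/(c-1)}, then h(k) ≤ h₀/(k+1) for all k ≥ 0. -/
theorem rk_rate_recursion (h : ℕ → ℝ) (c D₄ : ℝ) (hc : 1 < c) (hD₄ : 0 ≤ D₄)
    (hnonneg : ∀ k, 0 ≤ h k)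
    (hrec : ∀ k : ℕ, h (k + 1) ≤ h k - (c / (c + k + 1)) * h k + D₄ * (c / (c + k + 1)) ^ 2)
    (h₀ : ℝ) (hh₀ : h₀ = max (h 0) (D₄ * c ^ 2 / (c - 1))) :
    ∀ k : ℕ, h k ≤ h₀ / (k + 1) := by
  have hmax1 : h 0 ≤ h₀ := hh₀ ▸ le_max_left _ _
  have hmax2 : D₄ * c ^ 2 / (c - 1) ≤ h₀ := hh₀ ▸ le_max_right _ _
  have hc1 : (0:ℝ) < c - 1 := by linarith
  have hD : D₄ * c ^ 2 ≤ (c - 1) * h₀ := by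
    have := (div_le_iff₀ hc1).mp hmax2; linarith
  have h₀nn : 0 ≤ h₀ := le_trans (hnonneg 0) hmax1
  intro k
  induction k with
  | zero => simpa using hmax1
  | succ n ih =>
    have hn : (0:ℝ) ≤ (n:ℝ) := Nat.cast_nonneg n
    have ht : (0:ℝ) < c + n + 1 := by linarith
    have hn1 : (0:ℝ) < (n:ℝ) + 1 := by linarith
    have hγ : c / (c + n + 1) ≤ 1 := by
      rw [div_le_one ht]; linarith
    have step1 : h (n + 1) ≤ (1 - c / (c + n + 1)) * (h₀ / (n + 1)) +
        D₄ * (c / (c + n + 1)) ^ 2 := by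
      have h1 : h n - (c / (c + n + 1)) * h n = (1 - c / (c + n + 1)) * h n := by ring
      have h2 : (1 - c / (c + n + 1)) * h n ≤ (1 - c / (c + n + 1)) * (h₀ / (n + 1)) :=
        mul_le_mul_of_nonneg_left ih (by linarith)
      calc h (n + 1) ≤ h n - (c / (c + n + 1)) * h n + D₄ * (c / (c + n + 1)) ^ 2 := hrec n
        _ = (1 - c / (c + n + 1)) * h n + D₄ * (c / (c + n + 1)) ^ 2 := by rw [h1]
        _ ≤ _ := by linarith
    have final : (1 - c / (c + n + 1)) * (h₀ / (n + 1)) + D₄ * (c / (c + n + 1)) ^ 2 ≤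
        h₀ / ((n:ℝ) + 1 + 1) := by
      have e1 : (1 - c / (c + (n:ℝ) + 1)) * (h₀ / ((n:ℝ) + 1)) = h₀ / (c + (n:ℝ) + 1) := by
        field_simp
        ring
      have e2 : D₄ * (c / (c + (n:ℝ) + 1)) ^ 2 = D₄ * c ^ 2 / (c + (n:ℝ) + 1) ^ 2 := by
        rw [div_pow]; ring
      rw [e1, e2, div_add_div _ _ ht.ne' (by positivity), div_le_div_iff₀ (by positivity)
        (by positivity)]
      have key : D₄ * c ^ 2 * ((c + n + 1) * ((n:ℝ) + 2)) ≤
          (c - 1) * h₀ * ((c + n + 1) * ((n:ℝ) + 2)) :=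
        mul_le_mul_of_nonneg_right hD (by positivity)
      have key2 : 0 ≤ h₀ * (c + n + 1) * ((n:ℝ)+1) * (c - 1) ^ 2 := by positivity
      nlinarith [mul_pos ht hn1, sq_nonneg (c - 1), mul_nonneg h₀nn ht.le]
    have : ((n:ℝ) + 1 + 1) = ((n + 1 : ℕ) : ℝ) + 1 := by push_cast; ring
    calc h (n + 1) ≤ _ := step1
      _ ≤ h₀ / ((n:ℝ) + 1 + 1) := final
      _ = h₀ / (((n + 1 : ℕ) : ℝ) + 1) := by rw [this]
end

section
/- Let (x_k) be a real sequence with x₀ = 1 and x_{k+1} = |x_k - c_k/k| for k ≥ 1, where c_k ≥ 0. Suppose there exists C₁ > 0 such that for every k there is k' > k with c_{k'} > C₁. Then it is not the case that there exists K with |x_k| < C₁/(2k) for all k ≥ K; i.e., sup_{k' ≥ k} |x_{k'}| ≥ C₁/(2k) infinitely often. -/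
theorem fw_lower_bound_lemma (x c : ℕ → ℝ) (C₁ : ℝ) (hC₁ : 0 < C₁)
    (hx0 : x 0 = 1)
    (hc : ∀ k, 0 ≤ c k)
    (hrec : ∀ k : ℕ, 1 ≤ k → x (k + 1) = |x k - c k / k|)
    (hbig : ∀ k : ℕ, ∃ k' : ℕ, k < k' ∧ C₁ < c k') :
    ¬ ∃ K : ℕ, ∀ k : ℕ, K ≤ k → |x k| < C₁ / (2 * k) := by
  rintro ⟨K, hK⟩
  obtain ⟨k', hk'K, hck'⟩ := hbig (max K 1)
  have hk1 : 1 ≤ k' := (lt_of_le_of_lt (le_max_right K 1) hk'K).le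
  have hkK : K ≤ k' := (lt_of_le_of_lt (le_max_left K 1) hk'K).le
  have hkpos : (0 : ℝ) < (k' : ℝ) := by exact_mod_cast hk1
  have h1 : |x k'| < C₁ / (2 * k') := hK k' hkK
  have h2 : |x (k' + 1)| < C₁ / (2 * (k' + 1)) := by
    have := hK (k' + 1) (le_trans hkK (Nat.le_succ k'))
    simpa using this
  have hrec' : x (k' + 1) = |x k' - c k' / k'| := hrec k' hk1
  have hcnn : (0 : ℝ) ≤ c k' / k' := div_nonneg (hc k') hkpos.le
  have hlb : c k' / k' - |x k'| ≤ x (k' + 1) := by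
    rw [hrec', abs_sub_comm]
    calc c k' / k' - |x k'| = |c k' / k'| - |x k'| := by rw [abs_of_nonneg hcnn]
      _ ≤ |c k' / k' - x k'| := abs_sub_abs_le_abs_sub _ _
  have hcb : C₁ / (k' : ℝ) < c k' / k' := by gcongr
  have key : C₁ / (2 * k') < x (k' + 1) := by
    have : C₁ / (k' : ℝ) - C₁ / (2 * k') = C₁ / (2 * k') := by
      field_simp; ring
    nlinarith [hlb, hcb, h1]
  have hxnn : 0 ≤ x (k' + 1) := by rw [hrec']; exact abs_nonneg _
  have h2' : x (k' + 1) < C₁ / (2 * (k' + 1)) := by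
    rwa [abs_of_nonneg hxnn] at h2
  have hmono : C₁ / (2 * ((k' : ℝ) + 1)) < C₁ / (2 * k') := by
    apply div_lt_div_of_pos_left hC₁ (by linarith) (by linarith)
  push_cast at h2'
  linarith
end

section
/- Let c > 0, C₂ > 0, C₃ > 0, C₄ > 0 with C₂ ≥ 4C₃ and C₂ ≥ 4C₄. Suppose for some k ≥ max{C₂/C₃, 1} we have |x| ≤ C₂/k, and x⁺ satisfies |x⁺| ≤ max{ (C₂/k)(1 - C₃/k) - C₃/k, C₄/k }. Then |x⁺| ≤ C₂/(k+1). -/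
theorem rk_induction_step (c C₂ C₃ C₄ : ℝ) (hc : 0 < c) (hC₂ : 0 < C₂) (hC₃ : 0 < C₃)
    (hC₄ : 0 < C₄) (h23 : 4 * C₃ ≤ C₂) (h24 : 4 * C₄ ≤ C₂)
    (k : ℕ) (hk1 : 1 ≤ k) (hk2 : C₂ / C₃ ≤ (k : ℝ))
    (x xplus : ℝ) (hx : |x| ≤ C₂ / k)
    (hxplus : |xplus| ≤ max ((C₂ / k) * (1 - C₃ / k) - C₃ / k) (C₄ / k)) :
    |xplus| ≤ C₂ / (k + 1) := by
  have hK1 : (1 : ℝ) ≤ (k : ℝ) := by exact_mod_cast hk1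
  have hK0 : (0 : ℝ) < (k : ℝ) := by linarith
  have hC : C₂ ≤ C₃ * k := by
    have := (div_le_iff₀ hC₃).mp hk2; linarith
  refine hxplus.trans ?_
  apply max_le
  · have eL : C₂ / ↑k * (1 - C₃ / ↑k) - C₃ / ↑k = (C₂*(↑k - C₃) - C₃*↑k) / (↑k*↑k) := by
      field_simp
    rw [eL, div_le_div_iff₀ (by positivity) (by linarith)]
    nlinarith [mul_le_mul_of_nonneg_right hC hK0.le, mul_pos hC₂ hC₃, mul_pos hC₃ hK0]
  · rw [div_le_div_iff₀ hK0 (by linarith)]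
    nlinarith
end
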